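/- Suppose a sequence of errors produced by a one-step method satisfies ε_{n+1} = φ · H_n^P exactly, with φ > 0 constant and P a positive integer, and steps are chosen by the single-rate I-controller H_{n+1} = H_n (TOL/ε_{n+1})^{k/P} with 0 < k < 2 and TOL > 0. Then ε_n → TOL and H_n → (TOL/φ)^{1/P} as n → ∞, for any initial H_0 > 0. -/
import Mathlib


theorem stmt_12 (P : ℕ) (hP : 0 < P) (φ TOL k : ℝ)
    (hφ : 0 < φ) (hTOL : 0 < TOL) (hk0 : 0 < k) (hk2 : k < 2)
    (H ε : ℕ → ℝ) (hH0 : 0 < H 0)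
    (hmodel : ∀ n, ε (n + 1) = φ * H n ^ P)
    (hctrl : ∀ n, H (n + 1) = H n * (TOL / ε (n + 1)) ^ (k / (P : ℝ))) :
    Filter.Tendsto ε Filter.atTop (nhds TOL) ∧
    Filter.Tendsto H Filter.atTop (nhds ((TOL / φ) ^ (1 / (P : ℝ)))) := by
  have hPne : (P : ℝ) ≠ 0 := Nat.cast_ne_zero.mpr hP.ne'
  have hHpos : ∀ n, 0 < H n := by
    intro n
    induction n with
    | zero => exact hH0
    | succ m ih =>
      rw [hctrl m]
      have hε : 0 < ε (m + 1) := by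
        rw [hmodel m]; positivity
      positivity
  have hεpos : ∀ n, 0 < ε (n + 1) := by
    intro n; rw [hmodel n]; have := hHpos n; positivity
  set c : ℝ := (Real.log TOL - Real.log φ) / P with hc
  have hrec : ∀ n, Real.log (H (n + 1)) - c = (1 - k) * (Real.log (H n) - c) := by
    intro n
    have hHn := hHpos n
    have hεn := hεpos n
    have h1 : Real.log (H (n + 1)) =
        Real.log (H n) + (k / P) * (Real.log TOL - Real.log (ε (n + 1))) := by
      rw [hctrl n, Real.log_mul hHn.ne' (by positivity),
        Real.log_rpow (div_pos hTOL hεn), Real.log_div hTOL.ne' hεn.ne']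
    have h2 : Real.log (ε (n + 1)) = Real.log φ + P * Real.log (H n) := by
      rw [hmodel n, Real.log_mul hφ.ne' (by positivity), Real.log_pow]
    rw [h1, h2, hc]
    field_simp
    ring
  have hiter : ∀ n, Real.log (H n) - c = (1 - k) ^ n * (Real.log (H 0) - c) := by
    intro n
    induction n with
    | zero => simp
    | succ m ih => rw [hrec m, ih, pow_succ]; ring
  have habs : |1 - k| < 1 := by rw [abs_lt]; constructor <;> linarith
  have hf0 : Filter.Tendsto (fun n => (1 - k) ^ n * (Real.log (H 0) - c))
      Filter.atTop (nhds 0) := by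
    have := (tendsto_pow_atTop_nhds_zero_of_abs_lt_one habs).mul_const
      (Real.log (H 0) - c)
    simpa using this
  have hlog : Filter.Tendsto (fun n => Real.log (H n)) Filter.atTop (nhds c) := by
    have : Filter.Tendsto (fun n => Real.log (H n) - c) Filter.atTop (nhds 0) :=
      hf0.congr (fun n => (hiter n).symm)
    have := this.add_const c
    simpa using this
  have hHstar : Real.exp c = (TOL / φ) ^ (1 / (P : ℝ)) := by
    rw [Real.rpow_def_of_pos (div_pos hTOL hφ), Real.log_div hTOL.ne' hφ.ne']
    congr 1
    rw [hc]; field_simp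
  have hHtend : Filter.Tendsto H Filter.atTop (nhds ((TOL / φ) ^ (1 / (P : ℝ)))) := by
    have hexp := (Real.continuous_exp.tendsto c).comp hlog
    rw [← hHstar]
    have heq : (Real.exp ∘ fun n => Real.log (H n)) = H :=
      funext fun n => Real.exp_log (hHpos n)
    rwa [heq] at hexp
  refine ⟨?_, hHtend⟩
  have hpow : φ * ((TOL / φ) ^ (1 / (P : ℝ))) ^ P = TOL := by
    rw [← Real.rpow_natCast (((TOL / φ) ^ (1 / (P : ℝ)))) P,
      ← Real.rpow_mul (le_of_lt (div_pos hTOL hφ)), one_div,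
      inv_mul_cancel₀ hPne, Real.rpow_one]
    field_simp
  have h1 : Filter.Tendsto (fun n => ε (n + 1)) Filter.atTop (nhds TOL) := by
    have : Filter.Tendsto (fun n => φ * H n ^ P) Filter.atTop (nhds TOL) := by
      rw [← hpow]
      exact (hHtend.pow P).const_mul φ
    simpa [hmodel] using this
  exact (Filter.tendsto_add_atTop_iff_nat 1).mp h1
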